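/- arXiv:2602.12940 — 3 statements merged into one kernel-verified Lean document; each statement's English description precedes it below -/
import Mathlib

section
/- The function f(θ) = θ / cosh(θ/4) on (0,∞) attains a maximum, and hence there exists a critical value λ* > 0 such that the equation θ = √(2λ) cosh(θ/4) has at least two solutions θ for 0 < λ < λ*, exactly one solution at λ = λ*, and no solution for λ > λ*. -/
/-!
With `f θ = θ / cosh (θ / 4)`, the equation `θ = √(2λ) cosh (θ / 4)` says `f θ = √(2λ)`.
The numerator `cosh (θ / 4) - (θ / 4) sinh (θ / 4)` of `f'` has derivative
`-(θ / 16) cosh (θ / 4)`, so it decreases from `1` at `θ = 0` and changes sign exactly once, at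
some `t > 0`. Hence `f` rises strictly from `f 0 = 0` to its maximum `f t` and then decreases
strictly to `0`, and by the intermediate value theorem every level in `(0, f t)` is taken on each
side of `t`.
-/

open Real Set Filter Topology

section Unimodal

variable {f : ℝ → ℝ} {t : ℝ}

theorem apply_lt_apply_peak (hmono : StrictMonoOn f (Icc 0 t)) (hanti : StrictAntiOn f (Ici t))
    {θ : ℝ} (hθ : 0 ≤ θ) (hne : θ ≠ t) : f θ < f t := by
  rcases hne.lt_or_gt with hlt | hgt
  · exact hmono ⟨hθ, hlt.le⟩ ⟨hθ.trans hlt.le, le_rfl⟩ hlt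
  · exact hanti self_mem_Ici hgt.le hgt

theorem exists_two_eq_of_unimodal (hcont : ContinuousOn f (Ici 0)) (ht : 0 ≤ t)
    (hf0 : f 0 = 0) (htendsto : Tendsto f atTop (𝓝 0)) {c : ℝ} (hc : 0 < c) (hct : c < f t) :
    ∃ θ₁ θ₂, 0 < θ₁ ∧ θ₁ < θ₂ ∧ f θ₁ = c ∧ f θ₂ = c := by
  obtain ⟨θ₁, ⟨hθ₁pos, hθ₁t⟩, hfθ₁⟩ :=
    intermediate_value_Ioo ht (hcont.mono Icc_subset_Ici_self) ⟨by rwa [hf0], hct⟩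
  obtain ⟨T, hT⟩ := (htendsto.eventually_lt_const hc).exists_forall_of_atTop
  have htT : t ≤ max t T := le_max_left t T
  obtain ⟨θ₂, ⟨htθ₂, -⟩, hfθ₂⟩ :=
    intermediate_value_Ioo' htT (hcont.mono (Icc_subset_Ici_iff htT |>.mpr ht))
      ⟨hT _ (le_max_right t T), hct⟩
  exact ⟨θ₁, θ₂, hθ₁pos, hθ₁t.trans htθ₂, hfθ₁, hfθ₂⟩

end Unimodal

noncomputable def bratuProfile (θ : ℝ) : ℝ := θ / cosh (θ / 4)

noncomputable def bratuProfileDerivNum (θ : ℝ) : ℝ := cosh (θ / 4) - θ / 4 * sinh (θ / 4)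

theorem continuous_bratuProfile : Continuous bratuProfile :=
  continuous_id.div (by fun_prop) fun θ => (cosh_pos (θ / 4)).ne'

theorem hasDerivAt_bratuProfile (θ : ℝ) :
    HasDerivAt bratuProfile (bratuProfileDerivNum θ / cosh (θ / 4) ^ 2) θ := by
  have hquarter : HasDerivAt (fun x : ℝ => x / 4) (1 / 4) θ := (hasDerivAt_id θ).div_const 4
  refine ((hasDerivAt_id θ).div ((hasDerivAt_cosh _).comp θ hquarter)
    (cosh_pos _).ne').congr_deriv ?_
  simp only [bratuProfileDerivNum, id_eq, Function.comp_apply]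
  ring

theorem hasDerivAt_bratuProfileDerivNum (θ : ℝ) :
    HasDerivAt bratuProfileDerivNum (-(θ / 16) * cosh (θ / 4)) θ := by
  have hquarter : HasDerivAt (fun x : ℝ => x / 4) (1 / 4) θ := (hasDerivAt_id θ).div_const 4
  refine (((hasDerivAt_cosh _).comp θ hquarter).sub
    (hquarter.mul ((hasDerivAt_sinh _).comp θ hquarter))).congr_deriv ?_
  simp only [Function.comp_apply]
  ring

theorem strictAntiOn_bratuProfileDerivNum : StrictAntiOn bratuProfileDerivNum (Ici 0) := by
  refine strictAntiOn_of_deriv_neg (convex_Ici 0)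
    (fun θ _ => (hasDerivAt_bratuProfileDerivNum θ).continuousAt.continuousWithinAt) ?_
  intro θ hθ
  rw [interior_Ici, mem_Ioi] at hθ
  rw [(hasDerivAt_bratuProfileDerivNum θ).deriv]
  have := cosh_pos (θ / 4)
  nlinarith

theorem bratuProfileDerivNum_eight_neg : bratuProfileDerivNum 8 < 0 := by
  have h8 : (8 : ℝ) / 4 = 2 := by norm_num
  -- `cosh 2 - 2 sinh 2 = (3 exp (-2) - exp 2) / 2` and `exp 2 ≥ 3 > 3 exp (-2)`
  rw [bratuProfileDerivNum, h8, cosh_eq, sinh_eq]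
  have hexp2 := add_one_le_exp (2 : ℝ)
  have hexp_neg2 : exp (-2) < 1 := exp_lt_one_iff.mpr (by norm_num)
  linarith

theorem exists_bratuProfileDerivNum_eq_zero : ∃ t, 0 < t ∧ bratuProfileDerivNum t = 0 := by
  have hcont : Continuous bratuProfileDerivNum := by unfold bratuProfileDerivNum; fun_prop
  have hzero : bratuProfileDerivNum 0 = 1 := by simp [bratuProfileDerivNum]
  obtain ⟨t, ⟨ht0, -⟩, ht⟩ := intermediate_value_Ioo' (by norm_num : (0 : ℝ) ≤ 8)
    hcont.continuousOn
    (show (0 : ℝ) ∈ Ioo _ _ from ⟨bratuProfileDerivNum_eight_neg, by simp [hzero]⟩)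
  exact ⟨t, ht0, ht⟩

theorem exists_bratuProfile_peak :
    ∃ t, 0 < t ∧ StrictMonoOn bratuProfile (Icc 0 t) ∧ StrictAntiOn bratuProfile (Ici t) := by
  obtain ⟨t, ht, hnum⟩ := exists_bratuProfileDerivNum_eq_zero
  refine ⟨t, ht,
    strictMonoOn_of_deriv_pos (convex_Icc 0 t) continuous_bratuProfile.continuousOn ?_,
    strictAntiOn_of_deriv_neg (convex_Ici t) continuous_bratuProfile.continuousOn ?_⟩
  · intro θ hθ
    rw [interior_Icc] at hθ
    have hpos : 0 < bratuProfileDerivNum θ :=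
      hnum ▸ strictAntiOn_bratuProfileDerivNum hθ.1.le ht.le hθ.2
    rw [(hasDerivAt_bratuProfile θ).deriv]
    positivity
  · intro θ hθ
    rw [interior_Ici, mem_Ioi] at hθ
    have hneg : bratuProfileDerivNum θ < 0 :=
      hnum ▸ strictAntiOn_bratuProfileDerivNum ht.le (ht.trans hθ).le hθ
    rw [(hasDerivAt_bratuProfile θ).deriv]
    exact div_neg_of_neg_of_pos hneg (by positivity)

theorem bratuProfile_le_mul_exp_neg {θ : ℝ} (hθ : 0 ≤ θ) :
    bratuProfile θ ≤ 8 * ((θ / 4) ^ 1 * exp (-(θ / 4))) := by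
  have hcosh : exp (θ / 4) / 2 ≤ cosh (θ / 4) := by
    rw [cosh_eq]
    linarith [exp_pos (-(θ / 4))]
  calc bratuProfile θ ≤ θ / (exp (θ / 4) / 2) :=
        div_le_div_of_nonneg_left hθ (by positivity) hcosh
    _ = 8 * ((θ / 4) ^ 1 * exp (-(θ / 4))) := by
        rw [exp_neg]
        field_simp
        ring

theorem tendsto_bratuProfile_atTop : Tendsto bratuProfile atTop (𝓝 0) := by
  have hbound : Tendsto (fun θ : ℝ => 8 * ((θ / 4) ^ 1 * exp (-(θ / 4)))) atTop (𝓝 0) := by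
    simpa using ((tendsto_pow_mul_exp_neg_atTop_nhds_zero 1).comp
      (tendsto_id.atTop_div_const (by norm_num : (0 : ℝ) < 4))).const_mul 8
  refine tendsto_of_tendsto_of_tendsto_of_le_of_le' tendsto_const_nhds hbound ?_ ?_
  · filter_upwards [eventually_ge_atTop 0] with θ hθ
    exact div_nonneg hθ (cosh_pos _).le
  · filter_upwards [eventually_ge_atTop 0] with θ hθ
    exact bratuProfile_le_mul_exp_neg hθ

theorem eq_mul_cosh_iff_bratuProfile_eq (θ c : ℝ) :
    θ = c * cosh (θ / 4) ↔ bratuProfile θ = c :=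
  (div_eq_iff (cosh_pos (θ / 4)).ne').symm

theorem bratu_fold_structure :
    ∃ θmax : ℝ, 0 < θmax ∧
      (∀ θ : ℝ, 0 < θ → θ / Real.cosh (θ / 4) ≤ θmax / Real.cosh (θmax / 4)) ∧
      ∃ lamStar : ℝ, 0 < lamStar ∧
        lamStar = (θmax / Real.cosh (θmax / 4)) ^ 2 / 2 ∧
        (∀ lam : ℝ, 0 < lam → lam < lamStar →
          ∃ θ₁ θ₂ : ℝ, 0 < θ₁ ∧ 0 < θ₂ ∧ θ₁ ≠ θ₂ ∧
            θ₁ = Real.sqrt (2 * lam) * Real.cosh (θ₁ / 4) ∧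
            θ₂ = Real.sqrt (2 * lam) * Real.cosh (θ₂ / 4)) ∧
        (∃! θ : ℝ, 0 < θ ∧ θ = Real.sqrt (2 * lamStar) * Real.cosh (θ / 4)) ∧
        (∀ lam : ℝ, lamStar < lam →
          ¬∃ θ : ℝ, 0 < θ ∧ θ = Real.sqrt (2 * lam) * Real.cosh (θ / 4)) := by
  obtain ⟨t, ht, hmono, hanti⟩ := exists_bratuProfile_peak
  have hlt_peak {θ : ℝ} (hθ : 0 < θ) (hne : θ ≠ t) : bratuProfile θ < bratuProfile t :=
    apply_lt_apply_peak hmono hanti hθ.le hne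
  have hle_peak {θ : ℝ} (hθ : 0 < θ) : bratuProfile θ ≤ bratuProfile t := by
    rcases eq_or_ne θ t with rfl | hne
    exacts [le_rfl, (hlt_peak hθ hne).le]
  set M := bratuProfile t
  have hM : 0 < M := div_pos ht (cosh_pos _)
  have hsqrt_peak : √(2 * (M ^ 2 / 2)) = M := by
    rw [mul_div_cancel₀ _ two_ne_zero, sqrt_sq hM.le]
  simp only [eq_mul_cosh_iff_bratuProfile_eq]
  refine ⟨t, ht, fun _ => hle_peak, M ^ 2 / 2, by positivity, rfl, ?_, ?_, ?_⟩
  · intro lam hlam hlt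
    obtain ⟨θ₁, θ₂, hθ₁, h12, h₁, h₂⟩ :=
      exists_two_eq_of_unimodal (f := bratuProfile) (c := √(2 * lam))
        continuous_bratuProfile.continuousOn ht.le (by simp [bratuProfile])
        tendsto_bratuProfile_atTop (sqrt_pos.mpr (by positivity))
        ((sqrt_lt' hM).mpr (by linarith))
    exact ⟨θ₁, θ₂, hθ₁, hθ₁.trans h12, h12.ne, h₁, h₂⟩
  · rw [hsqrt_peak]
    exact ⟨t, ⟨ht, rfl⟩, fun θ ⟨hθ, hθM⟩ =>
      by_contra fun hne => (hlt_peak hθ hne).ne hθM⟩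
  · rintro lam hlt ⟨θ, hθ, hθeq⟩
    have hM_lt : M < √(2 * lam) := (lt_sqrt hM.le).mpr (by linarith)
    exact (hle_peak hθ).not_gt (hθeq ▸ hM_lt)
end

section
/- Nonexistence for the Bratu problem for large λ: let μ₁ = π²/L² be the first Dirichlet eigenvalue on (0,L); since e^u ≥ e·u for all u ∈ ℝ, any solution of λ₂ u'' + λ₁ e^u = 0 on (0,L) with u(0)=u(L)=0 satisfies λ₂ ∫ u'·φ' = λ₁ ∫ e^u φ ≥ λ₁ e ∫ u φ for nonnegative test functions φ, and taking φ the first eigenfunction shows that no solution exists when λ₁ e > λ₂ π²/L². -/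
open Real

theorem bratu_nonexistence_large_lambda
    (L lam1 lam2 : ℝ) (hL : 0 < L) (hlam2 : 0 < lam2) (hlam1 : 0 < lam1)
    (hbig : lam1 * Real.exp 1 > lam2 * π ^ 2 / L ^ 2) :
    ¬∃ u : ℝ → ℝ, ContDiff ℝ 2 u ∧
      (∀ x ∈ Set.Ioo (0 : ℝ) L,
        lam2 * deriv (deriv u) x + lam1 * Real.exp (u x) = 0) ∧
      u 0 = 0 ∧ u L = 0 := by
  rintro ⟨u, hu, heq, h0, hL0⟩
  set c : ℝ := lam1 / lam2 with hc
  have hcpos : 0 < c := div_pos hlam1 hlam2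
  have hdd : ∀ x ∈ Set.Ioo (0:ℝ) L, deriv (deriv u) x = -(c * Real.exp (u x)) := by
    intro x hx
    have h := heq x hx
    field_simp [hc]
    have h2 : c * lam2 = lam1 := by rw [hc]; exact div_mul_cancel₀ lam1 hlam2.ne'
    have h3 : lam2 * (deriv (deriv u) x + c * Real.exp (u x)) = 0 := by
      rw [mul_add, ← mul_assoc, mul_comm lam2 c, h2]; linarith
    rcases mul_eq_zero.mp h3 with h4 | h4
    · linarith
    · linarith
  -- differentiability facts
  have hu2 : ContDiff ℝ ((1:ℕ) + 1) u := by norm_num; exact hu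
  have hdu : Differentiable ℝ u ∧ _ ∧ ContDiff ℝ (1:ℕ) (deriv u) :=
    contDiff_succ_iff_deriv.mp hu2
  have hdiffu : Differentiable ℝ u := hdu.1
  have hdiffdu : Differentiable ℝ (deriv u) := hdu.2.2.differentiable (by simp)
  -- strict concavity
  have hconc : StrictConcaveOn ℝ (Set.Icc 0 L) u := by
    apply strictConcaveOn_of_deriv2_neg (convex_Icc 0 L) hu.continuous.continuousOn
    intro x hx
    rw [interior_Icc] at hx
    have := hdd x hx
    simp only [Function.iterate_succ, Function.iterate_zero, Function.comp_apply, id_eq]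
    rw [show deriv (deriv u) x = -(c * Real.exp (u x)) from this]
    have := Real.exp_pos (u x)
    nlinarith
  have hupos : ∀ x ∈ Set.Ioo (0:ℝ) L, 0 < u x := by
    intro x hx
    obtain ⟨hx0, hxL⟩ := hx
    have ht : x = (1 - x / L) • (0:ℝ) + (x / L) • L := by
      field_simp
      rw [smul_eq_mul, smul_eq_mul, mul_zero, zero_add, div_mul_cancel₀ x hL.ne']
    have h1 : (0:ℝ) < 1 - x / L := by
      have : x / L < 1 := (div_lt_one hL).mpr hxL
      linarith
    have h2 : (0:ℝ) < x / L := div_pos hx0 hL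
    have := hconc.2 (Set.left_mem_Icc.mpr hL.le) (Set.right_mem_Icc.mpr hL.le)
      (by linarith : (0:ℝ) ≠ L) h1 h2 (by ring)
    have hxeq : (1 - x / L) • (0:ℝ) + (x / L) • (L:ℝ) = x := by
      simp only [smul_eq_mul, mul_zero, zero_add]; field_simp
    rw [hxeq] at this
    simpa [h0, hL0] using this
  -- the Wronskian-type function
  set k : ℝ := π / L with hk
  have hkpos : 0 < k := div_pos Real.pi_pos hL
  set g : ℝ → ℝ := fun x => deriv u x * Real.sin (k * x) - u x * (k * Real.cos (k * x)) with hg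
  -- derivative of g
  have hgderiv : ∀ x, HasDerivAt g
      (deriv (deriv u) x * Real.sin (k * x) + (k^2) * (u x * Real.sin (k * x))) x := by
    intro x
    have hkx : HasDerivAt (fun y : ℝ => k * y) k x := by
      simpa using (hasDerivAt_id x).const_mul k
    have hsin : HasDerivAt (fun y : ℝ => Real.sin (k * y)) (Real.cos (k * x) * k) x :=
      (Real.hasDerivAt_sin (k * x)).comp x hkx
    have hcos : HasDerivAt (fun y : ℝ => Real.cos (k * y)) (-Real.sin (k * x) * k) x :=
      (Real.hasDerivAt_cos (k * x)).comp x hkx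
    have hu' : HasDerivAt u (deriv u x) x := (hdiffu x).hasDerivAt
    have hu'' : HasDerivAt (deriv u) (deriv (deriv u) x) x := (hdiffdu x).hasDerivAt
    have h1 : HasDerivAt (fun y => deriv u y * Real.sin (k * y))
        (deriv (deriv u) x * Real.sin (k * x) + deriv u x * (Real.cos (k * x) * k)) x :=
      hu''.mul hsin
    have h2 : HasDerivAt (fun y => u y * (k * Real.cos (k * y)))
        (deriv u x * (k * Real.cos (k * x)) + u x * (k * (-Real.sin (k * x) * k))) x :=
      hu'.mul (hcos.const_mul k)
    have := h1.sub h2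
    exact this.congr_deriv (by ring)
  have hganti : StrictAntiOn g (Set.Icc 0 L) := by
    apply strictAntiOn_of_deriv_neg (convex_Icc 0 L)
    · exact fun x _ => ((hgderiv x).continuousAt).continuousWithinAt
    · intro x hx
      rw [interior_Icc] at hx
      rw [(hgderiv x).deriv]
      obtain ⟨hx0, hxL⟩ := hx
      have hsinpos : 0 < Real.sin (k * x) := by
        apply Real.sin_pos_of_pos_of_lt_pi (by positivity)
        calc k * x < k * L := by nlinarith
        _ = π := by rw [hk]; exact div_mul_cancel₀ π hL.ne'
      have hux := hupos x ⟨hx0, hxL⟩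
      rw [hdd x ⟨hx0, hxL⟩]
      have hexp : Real.exp (u x) ≥ Real.exp 1 * u x := by
        have h := Real.add_one_le_exp (u x - 1)
        calc Real.exp (u x) = Real.exp 1 * Real.exp (u x - 1) := by
              rw [← Real.exp_add]; ring_nf
        _ ≥ Real.exp 1 * ((u x - 1) + 1) :=
              mul_le_mul_of_nonneg_left h (Real.exp_pos 1).le
        _ = Real.exp 1 * u x := by ring
      -- need k^2 < c * exp 1
      have hk2 : k ^ 2 < c * Real.exp 1 := by
        rw [hk, hc, div_pow]
        rw [gt_iff_lt, div_lt_iff₀ (by positivity)] at hbig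
        rw [div_mul_eq_mul_div, div_lt_div_iff₀ (by positivity) hlam2]
        nlinarith
      have hce : c * Real.exp (u x) ≥ c * (Real.exp 1 * u x) :=
        mul_le_mul_of_nonneg_left hexp hcpos.le
      nlinarith [mul_pos hsinpos hux]
  have hg0 : g 0 = 0 := by simp [hg, h0]
  have hgL : g L = 0 := by
    have : k * L = π := by rw [hk]; exact div_mul_cancel₀ π hL.ne'
    simp [hg, hL0, this]
  have := hganti (Set.left_mem_Icc.mpr hL.le) (Set.right_mem_Icc.mpr hL.le) hL
  rw [hg0, hgL] at this
  exact lt_irrefl 0 this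
end

section
/- Deflation blow-up property: let u* ∈ ℝⁿ, α > 0, p > 0, and define the deflated residual F(u) = (‖u - u*‖^{-p} + α)·G(u) where G : ℝⁿ → ℝⁿ is continuous with G differentiable at u* and G(u*) = 0 with invertible derivative. If p ≥ 1, then liminf over u → u* (u ≠ u*) of ‖F(u)‖ is strictly positive; in particular F does not tend to 0 at u*, so Newton's method applied to F cannot converge to the deflated root u* along residual-decreasing sequences. -/
theorem deflation_blow_up {n : ℕ}
    (G : EuclideanSpace ℝ (Fin n) → EuclideanSpace ℝ (Fin n))
    (uStar : EuclideanSpace ℝ (Fin n))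
    (hcont : Continuous G)
    (DG : EuclideanSpace ℝ (Fin n) ≃L[ℝ] EuclideanSpace ℝ (Fin n))
    (hderiv : HasFDerivAt G (DG : EuclideanSpace ℝ (Fin n) →L[ℝ] EuclideanSpace ℝ (Fin n)) uStar)
    (hroot : G uStar = 0)
    (α p : ℝ) (hα : 0 < α) (hp : 1 ≤ p)
    (F : EuclideanSpace ℝ (Fin n) → EuclideanSpace ℝ (Fin n))
    (hF : F = fun u => (‖u - uStar‖ ^ (-p) + α) • G u) :
    ∃ c : ℝ, 0 < c ∧ ∀ᶠ u in nhdsWithin uStar {uStar}ᶜ, c ≤ ‖F u‖ := by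
  set M : ℝ := ‖(DG.symm : EuclideanSpace ℝ (Fin n) →L[ℝ] EuclideanSpace ℝ (Fin n))‖ + 1 with hM
  have hMpos : 0 < M := by positivity
  have hDGlb : ∀ v : EuclideanSpace ℝ (Fin n), ‖v‖ / M ≤ ‖DG v‖ := by
    intro v
    have h1 : ‖v‖ ≤ M * ‖DG v‖ := by
      have := (DG.symm : EuclideanSpace ℝ (Fin n) →L[ℝ] EuclideanSpace ℝ (Fin n)).le_opNorm (DG v)
      simp only [ContinuousLinearEquiv.coe_coe, ContinuousLinearEquiv.symm_apply_apply] at this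
      refine this.trans ?_
      have : (0:ℝ) ≤ ‖DG v‖ := norm_nonneg _
      nlinarith [norm_nonneg ((DG.symm : EuclideanSpace ℝ (Fin n) →L[ℝ] EuclideanSpace ℝ (Fin n)))]
    exact (div_le_iff₀' hMpos).mpr h1
  have hε : (0:ℝ) < 1 / (2 * M) := by positivity
  have hlo := hderiv.isLittleO.def hε
  have hball : ∀ᶠ u in nhds uStar, ‖u - uStar‖ ≤ 1 := by
    have : Metric.closedBall uStar 1 ∈ nhds uStar := Metric.closedBall_mem_nhds _ one_pos
    filter_upwards [this] with u hu
    simpa [dist_eq_norm] using hu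
  refine ⟨1 / (2 * M), hε, ?_⟩
  filter_upwards [nhdsWithin_le_nhds hlo, nhdsWithin_le_nhds hball,
    self_mem_nhdsWithin] with u hu hu1 hne
  have hne' : u ≠ uStar := hne
  set r : ℝ := ‖u - uStar‖ with hr
  have hrpos : 0 < r := by
    simpa [hr] using norm_pos_iff.mpr (sub_ne_zero.mpr hne')
  rw [hroot, sub_zero] at hu
  -- ‖G u‖ ≥ r/(2M)
  have hG : r / (2 * M) ≤ ‖G u‖ := by
    have h1 : r / M ≤ ‖DG (u - uStar)‖ := hDGlb _
    have h2 : ‖DG (u - uStar)‖ ≤ ‖G u - DG (u - uStar)‖ + ‖G u‖ := by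
      calc ‖DG (u - uStar)‖ = ‖-(G u - DG (u - uStar)) + G u‖ := by
            congr 1; abel
        _ ≤ ‖-(G u - DG (u - uStar))‖ + ‖G u‖ := norm_add_le _ _
        _ = ‖G u - DG (u - uStar)‖ + ‖G u‖ := by rw [norm_neg]
    have h3 : ‖G u - DG (u - uStar)‖ ≤ 1 / (2 * M) * r := hu
    have : r / M - 1 / (2 * M) * r ≤ ‖G u‖ := by linarith
    have heq : r / M - 1 / (2 * M) * r = r / (2 * M) := by field_simp; ring
    linarith [heq ▸ this]
  have hrp : (1:ℝ) ≤ r ^ (-p + 1) := by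
    apply Real.one_le_rpow_of_pos_of_le_one_of_nonpos hrpos hu1
    linarith
  have hFnorm : ‖F u‖ = (r ^ (-p) + α) * ‖G u‖ := by
    rw [hF]
    simp only [norm_smul, Real.norm_eq_abs]
    rw [abs_of_pos]
    positivity
  rw [hFnorm]
  have hkey : r ^ (-p) * (r / (2 * M)) = r ^ (-p + 1) / (2 * M) := by
    rw [Real.rpow_add hrpos, Real.rpow_one]; ring
  calc (1:ℝ) / (2 * M) ≤ r ^ (-p + 1) / (2 * M) := by
        gcongr
    _ = r ^ (-p) * (r / (2 * M)) := hkey.symm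
    _ ≤ r ^ (-p) * ‖G u‖ := by
        apply mul_le_mul_of_nonneg_left hG (Real.rpow_nonneg hrpos.le _)
    _ ≤ (r ^ (-p) + α) * ‖G u‖ := by nlinarith [norm_nonneg (G u)]
end
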